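/- arXiv:1404.6538 — 3 statements merged into one kernel-verified Lean document; each statement's English description precedes it below -/
import Mathlib

section
/- Let n be a positive integer, C ⊆ {1,…,n}, and let 𝓗 be a finite family of subsets of {1,…,n}∖C with nonnegative real coefficients α_H ≥ 0 for H ∈ 𝓗. Then for every x ∈ {0,1}^n, −Σ_{H∈𝓗} α_H ∏_{j∈H∪C} x_j = min over w ∈ {0,1} of Σ_{H∈𝓗} α_H · w · (1 − ∏_{j∈C} x_j − ∏_{j∈H} x_j). -/
/-! Write `c = ∏_{j ∈ C} x_j` and `h_H = ∏_{j ∈ H} x_j`, both in `{0,1}`. Since `H` and `C` are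
disjoint, `∏_{j ∈ H ∪ C} x_j = h_H c`. Choosing `w = c` gives each term
`α_H c (1 - c - h_H) = -α_H h_H c` because `c² = c`, and for binary `w, c, h` one checks
`-h c ≤ w (1 - c - h)`, so no other `w` does better, term by term. -/

theorem Finset.prod_eq_zero_or_one {ι R : Type*} [CommMonoidWithZero R] {s : Finset ι}
    {x : ι → R} (hx : ∀ j ∈ s, x j = 0 ∨ x j = 1) :
    ∏ j ∈ s, x j = 0 ∨ ∏ j ∈ s, x j = 1 :=
  Finset.prod_induction x (fun p => p = 0 ∨ p = 1)
    (fun a b ha hb => by rcases ha with rfl | rfl <;> simp [hb]) (Or.inr rfl) hx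

theorem IsIdempotentElem.mul_one_sub_sub {R : Type*} [CommRing R] {c : R}
    (hc : IsIdempotentElem c) (h : R) : c * (1 - c - h) = -(h * c) := by
  linear_combination -hc.eq

theorem neg_mul_le_mul_one_sub_sub {R : Type*} [CommRing R] [LinearOrder R]
    [IsStrictOrderedRing R] {w c h : R} (hw : w = 0 ∨ w = 1) (hc : c = 0 ∨ c = 1)
    (hh : h = 0 ∨ h = 1) : -(h * c) ≤ w * (1 - c - h) := by
  rcases hw with rfl | rfl <;> rcases hc with rfl | rfl <;> rcases hh with rfl | rfl <;> norm_num

theorem quadratization_common_parts_negative_general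
    (n : ℕ) (C : Finset (Fin n))
    (𝓗 : Finset (Finset (Fin n))) (h𝓗 : ∀ H ∈ 𝓗, Disjoint H C)
    (α : Finset (Fin n) → ℝ) (hα : ∀ H ∈ 𝓗, 0 ≤ α H)
    (x : Fin n → ℝ) (hx : ∀ j, x j = 0 ∨ x j = 1) :
    IsLeast
      {s : ℝ | ∃ w : ℝ, (w = 0 ∨ w = 1) ∧
        s = ∑ H ∈ 𝓗, α H * w * (1 - (∏ j ∈ C, x j) - ∏ j ∈ H, x j)}
      (-∑ H ∈ 𝓗, α H * ∏ j ∈ H ∪ C, x j) := by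
  have hbin (s : Finset (Fin n)) : ∏ j ∈ s, x j = 0 ∨ ∏ j ∈ s, x j = 1 :=
    Finset.prod_eq_zero_or_one fun j _ => hx j
  have hunion (H) (hH : H ∈ 𝓗) : ∏ j ∈ H ∪ C, x j = (∏ j ∈ H, x j) * ∏ j ∈ C, x j :=
    Finset.prod_union (h𝓗 H hH)
  have hidem : IsIdempotentElem (∏ j ∈ C, x j) := by
    rcases hbin C with h | h <;> rw [h]
    exacts [.zero, .one]
  rw [← Finset.sum_neg_distrib]
  refine ⟨⟨∏ j ∈ C, x j, hbin C, Finset.sum_congr rfl fun H hH => ?_⟩, ?_⟩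
  · rw [hunion H hH, mul_assoc, hidem.mul_one_sub_sub, mul_neg]
  · rintro s ⟨w, hw, rfl⟩
    refine Finset.sum_le_sum fun H hH => ?_
    rw [hunion H hH, mul_assoc, ← mul_neg]
    exact mul_le_mul_of_nonneg_left (neg_mul_le_mul_one_sub_sub hw (hbin C) (hbin H)) (hα H hH)

/-- Theorem 3 (splitting a common part `C` from a collection of negative terms).
The family `𝓗` of subsets of `[n] \ C` is a `Finset` of `Finset`s, each disjoint
from `C`, with nonnegative coefficients `α`. The minimum over the new binary
variable `w ∈ {0,1}` is stated via `IsLeast`. -/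
theorem quadratization_common_parts_negative
    (n : ℕ) (hn : 0 < n) (C : Finset (Fin n))
    (𝓗 : Finset (Finset (Fin n))) (h𝓗 : ∀ H ∈ 𝓗, Disjoint H C)
    (α : Finset (Fin n) → ℝ) (hα : ∀ H ∈ 𝓗, 0 ≤ α H)
    (x : Fin n → ℝ) (hx : ∀ j, x j = 0 ∨ x j = 1) :
    IsLeast
      {s : ℝ | ∃ w : ℝ, (w = 0 ∨ w = 1) ∧
        s = ∑ H ∈ 𝓗, α H * w * (1 - (∏ j ∈ C, x j) - ∏ j ∈ H, x j)}
      (-∑ H ∈ 𝓗, α H * ∏ j ∈ H ∪ C, x j) :=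
  quadratization_common_parts_negative_general n C 𝓗 h𝓗 α hα x hx
end

section
/- In the identity of Theorem 3, the choice w = ∏_{j∈C} x_j attains the minimum: for every x ∈ {0,1}^n, setting w* = ∏_{j∈C} x_j gives Σ_{H∈𝓗} α_H · w* · (1 − ∏_{j∈C} x_j − ∏_{j∈H} x_j) = −Σ_{H∈𝓗} α_H ∏_{j∈H∪C} x_j, and this value is ≤ the value of the expression at both w = 0 and w = 1. -/
/-!
For `x ∈ {0,1}ⁿ` the products `p = ∏_{j∈C} x_j` and `q = ∏_{j∈H} x_j` are idempotent reals,
hence lie in `[0,1]`, and `∏_{j∈H∪C} x_j = q p` because `H` and `C` are disjoint. Termwise,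
`p (1 - p - q) = -q p` by `p² = p`; `-q p ≤ 0` since `p, q ≥ 0`; and
`-q p ≤ 1 - p - q` is `0 ≤ (1 - p)(1 - q)`. Multiplying by `α_H ≥ 0` and summing gives the claim.
-/

open Finset

theorem IsIdempotentElem.finset_prod {ι M : Type*} [CommMonoid M] {s : Finset ι} {f : ι → M}
    (hf : ∀ i ∈ s, IsIdempotentElem (f i)) : IsIdempotentElem (∏ i ∈ s, f i) :=
  prod_induction f IsIdempotentElem (fun _ _ ↦ IsIdempotentElem.mul) .one hf

namespace IsIdempotentElem

variable {R : Type*} [CommRing R] {p q : R}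

theorem mul_one_sub_sub_s4 (hp : IsIdempotentElem p) (q : R) : p * (1 - p - q) = -(q * p) := by
  linear_combination (-1 : R) * hp.eq

variable [LinearOrder R] [IsStrictOrderedRing R]

theorem nonneg (hp : IsIdempotentElem p) : 0 ≤ p :=
  hp.eq ▸ mul_self_nonneg p

theorem le_one (hp : IsIdempotentElem p) : p ≤ 1 :=
  sub_nonneg.1 hp.one_sub.nonneg

end IsIdempotentElem

theorem neg_mul_le_one_sub_sub {R : Type*} [CommRing R] [PartialOrder R] [IsOrderedRing R]
    {p q : R} (hp : p ≤ 1) (hq : q ≤ 1) : -(q * p) ≤ 1 - p - q := by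
  have : 0 ≤ (1 - p) * (1 - q) := mul_nonneg (sub_nonneg.2 hp) (sub_nonneg.2 hq)
  linear_combination this

theorem common_parts_negative_minimizer_general
    (n : ℕ) (C : Finset (Fin n))
    (𝓗 : Finset (Finset (Fin n))) (h𝓗 : ∀ H ∈ 𝓗, Disjoint H C)
    (α : Finset (Fin n) → ℝ) (hα : ∀ H ∈ 𝓗, 0 ≤ α H)
    (x : Fin n → ℝ) (hx : ∀ j, x j = 0 ∨ x j = 1) :
    (∑ H ∈ 𝓗, α H * (∏ j ∈ C, x j) * (1 - (∏ j ∈ C, x j) - ∏ j ∈ H, x j)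
      = -∑ H ∈ 𝓗, α H * ∏ j ∈ H ∪ C, x j)
    ∧ (-∑ H ∈ 𝓗, α H * ∏ j ∈ H ∪ C, x j
        ≤ ∑ H ∈ 𝓗, α H * 0 * (1 - (∏ j ∈ C, x j) - ∏ j ∈ H, x j))
    ∧ (-∑ H ∈ 𝓗, α H * ∏ j ∈ H ∪ C, x j
        ≤ ∑ H ∈ 𝓗, α H * 1 * (1 - (∏ j ∈ C, x j) - ∏ j ∈ H, x j)) := by
  have hidem (S : Finset (Fin n)) : IsIdempotentElem (∏ j ∈ S, x j) :=
    .finset_prod fun j _ ↦ IsIdempotentElem.iff_eq_zero_or_one.2 (hx j)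
  rw [← sum_neg_distrib]
  refine ⟨sum_congr rfl fun H hH ↦ ?_, sum_le_sum fun H hH ↦ ?_, sum_le_sum fun H hH ↦ ?_⟩ <;>
    rw [prod_union (h𝓗 H hH), ← mul_neg]
  · rw [mul_assoc, (hidem C).mul_one_sub_sub_s4]
  · rw [mul_zero, zero_mul]
    exact mul_nonpos_of_nonneg_of_nonpos (hα H hH)
      (neg_nonpos.2 (mul_nonneg (hidem H).nonneg (hidem C).nonneg))
  · rw [mul_one]
    exact mul_le_mul_of_nonneg_left (neg_mul_le_one_sub_sub (hidem C).le_one (hidem H).le_one)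
      (hα H hH)

/-- Key claim in the proof of Theorem 3: the choice `w* = ∏_{j∈C} x_j` attains the
minimum. At `w = w*` the expression equals `-∑ α_H ∏_{j∈H∪C} x_j`, and this value is
at most the value of the expression at `w = 0` and at `w = 1`. -/
theorem common_parts_negative_minimizer
    (n : ℕ) (hn : 0 < n) (C : Finset (Fin n))
    (𝓗 : Finset (Finset (Fin n))) (h𝓗 : ∀ H ∈ 𝓗, Disjoint H C)
    (α : Finset (Fin n) → ℝ) (hα : ∀ H ∈ 𝓗, 0 ≤ α H)
    (x : Fin n → ℝ) (hx : ∀ j, x j = 0 ∨ x j = 1) :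
    (∑ H ∈ 𝓗, α H * (∏ j ∈ C, x j) * (1 - (∏ j ∈ C, x j) - ∏ j ∈ H, x j)
      = -∑ H ∈ 𝓗, α H * ∏ j ∈ H ∪ C, x j)
    ∧ (-∑ H ∈ 𝓗, α H * ∏ j ∈ H ∪ C, x j
        ≤ ∑ H ∈ 𝓗, α H * 0 * (1 - (∏ j ∈ C, x j) - ∏ j ∈ H, x j))
    ∧ (-∑ H ∈ 𝓗, α H * ∏ j ∈ H ∪ C, x j
        ≤ ∑ H ∈ 𝓗, α H * 1 * (1 - (∏ j ∈ C, x j) - ∏ j ∈ H, x j)) :=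
  common_parts_negative_minimizer_general n C 𝓗 h𝓗 α hα x hx
end

section
/- Let k ≥ 1 and d = 2k+1. For every x ∈ {0,1}^d, ∏_{j=1}^d x_j = S_2 + min over w ∈ {0,1}^k of [ Σ_{j=1}^k (4j−1)·w_j − 2·(Σ_{j=1}^k w_j)·(Σ_{j=1}^d x_j) + w_k·( Σ_{j=1}^d x_j − d + 1 ) ], where S_2 = Σ_{1≤i<j≤d} x_i x_j. -/
/-!
The objective is affine in `w`, so its minimum over `{0,1}^k` is the sum of the negative parts
of its coefficients, and for binary `x` everything depends only on `N = ∑ x_j`: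
`S₂ = N(N-1)/2`, the coefficient of `w_j` is `4j - 1 - 2N` for `j < k`, and that of `w_k` is
`2k - 1 - N`. The first `min(k-1, ⌊N/2⌋)` of the former are negative and sum to `-N(N-1)/2`
as long as `N ≤ 2k - 1`; the two remaining cases `N = 2k` and `N = 2k + 1` are checked directly.
-/

open Finset

theorem isLeast_affine_binary {ι R : Type*} [Fintype ι] [Ring R] [LinearOrder R]
    [IsStrictOrderedRing R] {f : (ι → R) → R} {a : R} {c : ι → R}
    (hf : ∀ w, f w = a + ∑ i, c i * w i) :
    IsLeast {s | ∃ w : ι → R, (∀ i, w i = 0 ∨ w i = 1) ∧ s = f w}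
      (a + ∑ i, min 0 (c i)) := by
  refine ⟨⟨fun i => if c i < 0 then 1 else 0,
    fun i => by by_cases h : c i < 0 <;> simp [h], ?_⟩, ?_⟩
  · rw [hf]
    congr 1
    refine sum_congr rfl fun i _ => ?_
    split_ifs with h
    · rw [min_eq_right h.le, mul_one]
    · rw [min_eq_left (not_lt.mp h), mul_zero]
  · rintro s ⟨w, hw, rfl⟩
    rw [hf]
    gcongr with i
    rcases hw i with h | h <;> simp [h]

theorem sq_sum_eq_two_mul_sum_lt_add_sum_sq {ι R : Type*} [LinearOrder ι] [Fintype ι]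
    [CommRing R] (x : ι → R) :
    (∑ i, x i) ^ 2 = 2 * ∑ i, ∑ j, (if i < j then x i * x j else 0) + ∑ i, x i ^ 2 := by
  have hsplit : ∀ i j, x i * x j = ((if i < j then x i * x j else 0) +
      if j < i then x j * x i else 0) + if i = j then x j ^ 2 else 0 := by
    intro i j
    rcases lt_trichotomy i j with h | rfl | h
    · simp [h, h.not_gt, h.ne]
    · simp [sq]
    · simp [h, h.not_gt, h.ne', mul_comm]
  rw [sq, sum_mul_sum, sum_congr rfl fun i _ => sum_congr rfl fun j _ => hsplit i j]
  simp only [sum_add_distrib, sum_ite_eq, mem_univ, if_true]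
  rw [sum_comm (f := fun i j => if j < i then x j * x i else 0)]
  ring

section Binary

variable {ι : Type*} [Fintype ι] {x : ι → ℝ}

theorem sum_eq_card_filter_eq_one (hx : ∀ j, x j = 0 ∨ x j = 1) :
    ∑ j, x j = #{j | x j = 1} := by
  rw [← sum_boole]
  refine sum_congr rfl fun j _ => ?_
  rcases hx j with h | h <;> simp [h]

theorem prod_eq_ite_card_filter_eq_one (hx : ∀ j, x j = 0 ∨ x j = 1) :
    ∏ j, x j = if #{j | x j = 1} = Fintype.card ι then 1 else 0 := by
  have hboole : ∏ j, x j = ∏ j, if x j = 1 then (1 : ℝ) else 0 :=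
    prod_congr rfl fun j _ => by rcases hx j with h | h <;> simp [h]
  simp only [hboole, prod_boole, ← card_univ, card_filter_eq_iff]

theorem sum_lt_mul_eq_of_binary [LinearOrder ι] (hx : ∀ j, x j = 0 ∨ x j = 1) :
    ∑ i, ∑ j, (if i < j then x i * x j else 0) = ((∑ j, x j) ^ 2 - ∑ j, x j) / 2 := by
  have hsq : ∀ j, x j ^ 2 = x j := fun j => by rcases hx j with h | h <;> simp [h]
  rw [sq_sum_eq_two_mul_sum_lt_add_sum_sq, sum_congr rfl fun j _ => hsq j]
  ring

end Binary

theorem sum_range_four_mul_add_three_sub (n : ℕ) (a : ℝ) :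
    ∑ i ∈ range n, (4 * (i : ℝ) + 3 - a) = 2 * n ^ 2 + n - a * n := by
  induction n with
  | zero => simp
  | succ n ih => rw [sum_range_succ, ih]; push_cast; ring

theorem sum_range_min_zero (n N : ℕ) :
    ∑ i ∈ range n, min 0 (4 * (i : ℝ) + 3 - 2 * N) =
      ∑ i ∈ range (min n (N / 2)), (4 * (i : ℝ) + 3 - 2 * N) := by
  rw [← sum_range_add_sum_Ico _ (min_le_left n (N / 2))]
  have hneg : ∀ i ∈ range (min n (N / 2)),
      min 0 (4 * (i : ℝ) + 3 - 2 * N) = 4 * i + 3 - 2 * N := by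
    intro i hi
    rw [mem_range, lt_min_iff] at hi
    have h : (4 * i + 4 : ℝ) ≤ 2 * N := by exact_mod_cast (by omega : 4 * i + 4 ≤ 2 * N)
    exact min_eq_right (by linarith)
  have hnonneg : ∀ i ∈ Ico (min n (N / 2)) n, min 0 (4 * (i : ℝ) + 3 - 2 * N) = 0 := by
    intro i hi
    rw [mem_Ico, min_le_iff] at hi
    have h : (2 * N : ℝ) ≤ 4 * i + 3 := by exact_mod_cast (by omega : 2 * N ≤ 4 * i + 3)
    exact min_eq_left (by linarith)
  rw [sum_congr rfl hneg, sum_congr rfl hnonneg, sum_const_zero, add_zero]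

/-- The coefficient of `w_{i+1}` once `∑ x_j = σ`, for `k = m + 1`; the last one absorbs
the term `w_k (σ - d + 1)`. -/
def ishikawaCoeff (m : ℕ) (σ : ℝ) : Fin (m + 1) → ℝ :=
  Fin.lastCases (2 * m + 1 - σ) fun i => 4 * i + 3 - 2 * σ

theorem ishikawa_objective_eq (m : ℕ) (σ : ℝ) (w : Fin (m + 1) → ℝ) :
    (∑ j : Fin (m + 1), (4 * ((j : ℕ) + 1 : ℝ) - 1) * w j) - 2 * (∑ j, w j) * σ
        + w (Fin.last m) * (σ - ((2 * (m + 1) + 1 : ℕ) : ℝ) + 1) =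
      ∑ j, ishikawaCoeff m σ j * w j := by
  rw [mul_right_comm, mul_sum, ← sum_sub_distrib, Fin.sum_univ_castSucc, Fin.sum_univ_castSucc,
    add_assoc]
  congr 1
  · refine sum_congr rfl fun j _ => ?_
    simp only [ishikawaCoeff, Fin.lastCases_castSucc, Fin.val_castSucc]
    ring
  · simp only [ishikawaCoeff, Fin.lastCases_last, Fin.val_last]
    push_cast
    ring

theorem half_sq_sub_add_sum_min_ishikawaCoeff (m N : ℕ) (hN : N ≤ 2 * (m + 1) + 1) :
    ((N : ℝ) ^ 2 - N) / 2 + ∑ i, min 0 (ishikawaCoeff m N i) =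
      if N = 2 * (m + 1) + 1 then 1 else 0 := by
  simp only [Fin.sum_univ_castSucc, ishikawaCoeff, Fin.lastCases_last, Fin.lastCases_castSucc]
  rw [Fin.sum_univ_eq_sum_range (fun i => min 0 (4 * (i : ℝ) + 3 - 2 * N)), sum_range_min_zero,
    sum_range_four_mul_add_three_sub]
  rcases Nat.lt_or_ge N (2 * m + 2) with hlt | hge
  · have hlast : (0 : ℝ) ≤ 2 * m + 1 - N := by
      rw [sub_nonneg]; exact_mod_cast (by omega : N ≤ 2 * m + 1)
    rw [min_eq_left hlast, min_eq_right (by omega : N / 2 ≤ m), if_neg (by omega)]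
    obtain ⟨t, rfl | rfl⟩ := Nat.even_or_odd' N
    · rw [show 2 * t / 2 = t by omega]; push_cast; ring
    · rw [show (2 * t + 1) / 2 = t by omega]; push_cast; ring
  · rw [min_eq_left (by omega : m ≤ N / 2)]
    obtain rfl | rfl : N = 2 * m + 2 ∨ N = 2 * m + 3 := by omega
    · rw [if_neg (by omega)]; push_cast; rw [min_eq_right (by linarith)]; ring
    · rw [if_pos (by omega)]; push_cast; rw [min_eq_right (by linarith)]; ring

/-- Ishikawa's quadratization of a positive monomial of odd degree `d = 2k+1`:
`∏_{j=1}^d x_j = S₂ + min_{w∈{0,1}^k} [∑_{j=1}^k (4j−1) w_j − 2 (∑_j w_j)(∑_j x_j)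
 + w_k (∑_j x_j − d + 1)]`, where `S₂ = ∑_{1≤i<j≤d} x_i x_j`.
Indices `j = 1,…,k` are modeled by `Fin k` via `j ↦ j.val + 1`, and `w_k` is the
last coordinate. -/
theorem ishikawa_odd
    (k : ℕ) (hk : 1 ≤ k) (d : ℕ) (hd : d = 2 * k + 1)
    (x : Fin d → ℝ) (hx : ∀ j, x j = 0 ∨ x j = 1) :
    IsLeast
      {s : ℝ | ∃ w : Fin k → ℝ, (∀ i, w i = 0 ∨ w i = 1) ∧
        s = (∑ i : Fin d, ∑ j : Fin d, if i < j then x i * x j else 0)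
            + ((∑ j : Fin k, (4 * ((j : ℕ) + 1 : ℝ) - 1) * w j)
               - 2 * (∑ j : Fin k, w j) * (∑ j : Fin d, x j)
               + w ⟨k - 1, by omega⟩ * ((∑ j : Fin d, x j) - (d : ℝ) + 1))}
      (∏ j, x j) := by
  obtain ⟨m, rfl⟩ : ∃ m, k = m + 1 := ⟨k - 1, by omega⟩
  subst hd
  have hN : #{j | x j = 1} ≤ 2 * (m + 1) + 1 := (card_filter_le _ _).trans_eq (by simp)
  rw [prod_eq_ite_card_filter_eq_one hx, Fintype.card_fin,
    ← half_sq_sub_add_sum_min_ishikawaCoeff m _ hN]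
  refine isLeast_affine_binary fun w => ?_
  rw [sum_lt_mul_eq_of_binary hx, sum_eq_card_filter_eq_one hx]
  exact congrArg _ (ishikawa_objective_eq m _ w)
end
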